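/- arXiv:2206.11031 — 3 statements merged into one kernel-verified Lean document; each statement's English description precedes it below -/
import Mathlib

section
/- Let A = {U₁, L₁, U, L} be a four-letter alphabet and let f be the monoid endomorphism of the free monoid on A determined by f(U₁) = U₁·U·L₁, f(L₁) = U₁·L·L₁, f(U) = U, f(L) = L. Then for every natural number n, the word f^n(U₁) (the n-th iterate of f applied to the one-letter word U₁) contains no two identical nonempty factors standing next to each other; that is, f^n(U₁) has no factor of the form Q·Q with Q a nonempty word. -/
/-- The four-letter alphabet `{U₁, L₁, U, L}`. -/
inductive Letter : Type
  | U1 | L1 | U | L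
  deriving DecidableEq

instance : Fintype Letter :=
  ⟨{Letter.U1, Letter.L1, Letter.U, Letter.L}, fun x => by cases x <;> simp⟩

/-- The substitution `f(U₁) = U₁UL₁`, `f(L₁) = U₁LL₁`, `f(U) = U`, `f(L) = L`,
as a monoid endomorphism of the free monoid on `Letter`. -/
def subst : FreeMonoid Letter →* FreeMonoid Letter :=
  FreeMonoid.lift fun a =>
    match a with
    | Letter.U1 => FreeMonoid.of Letter.U1 * FreeMonoid.of Letter.U * FreeMonoid.of Letter.L1
    | Letter.L1 => FreeMonoid.of Letter.U1 * FreeMonoid.of Letter.L * FreeMonoid.of Letter.L1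
    | Letter.U => FreeMonoid.of Letter.U
    | Letter.L => FreeMonoid.of Letter.L

def W (i : ℕ) : Letter :=
  if h1 : i % 2 = 0 then (if i % 4 = 0 then Letter.U1 else Letter.L1)
  else if h2 : i % 4 = 1 then (if (i / 2) % 4 = 0 then Letter.U else Letter.L)
  else W (i / 2)
decreasing_by omega

lemma W_even {i : ℕ} (h : i % 2 = 0) :
    W i = if i % 4 = 0 then Letter.U1 else Letter.L1 := by
  rw [W, dif_pos h]

lemma W_odd1 {i : ℕ} (h : i % 4 = 1) :
    W i = if (i / 2) % 4 = 0 then Letter.U else Letter.L := by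
  rw [W, dif_neg (by omega), dif_pos h]

lemma W_odd3 {i : ℕ} (h : i % 4 = 3) : W i = W (i / 2) := by
  rw [W, dif_neg (by omega), dif_neg (by omega)]

example : subst (FreeMonoid.of Letter.U) = FreeMonoid.of Letter.U := rfl
example : subst (FreeMonoid.of Letter.U1) =
    FreeMonoid.of Letter.U1 * FreeMonoid.of Letter.U * FreeMonoid.of Letter.L1 := rfl

lemma W_mem_even {i : ℕ} (h : i % 2 = 0) : W i = Letter.U1 ∨ W i = Letter.L1 := by
  rw [W_even h]; split <;> simp

lemma W_mem_odd : ∀ i : ℕ, i % 2 = 1 → W i = Letter.U ∨ W i = Letter.L := by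
  intro i
  induction i using Nat.strong_induction_on with
  | _ i ih =>
    intro h
    rcases Nat.lt_or_ge (i % 4) 2 with h4 | h4
    · rw [W_odd1 (by omega)]; split <;> simp
    · rw [W_odd3 (by omega)]
      exact ih (i / 2) (by omega) (by omega)

/-- `W (2j+1)` determines `W j` given the parity of `j`. -/
lemma W_half {j j' : ℕ} (hp : j % 2 = j' % 2) (h : W (2 * j + 1) = W (2 * j' + 1)) :
    W j = W j' := by
  rcases Nat.even_or_odd j with he | ho
  · have hje : j % 2 = 0 := Nat.even_iff.mp he
    have hje' : j' % 2 = 0 := by omega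
    have d1 : (2 * j + 1) / 2 = j := by omega
    have d2 : (2 * j' + 1) / 2 = j' := by omega
    rw [W_odd1 (i := 2 * j + 1) (by omega), d1] at h
    rw [W_odd1 (i := 2 * j' + 1) (by omega), d2] at h
    rw [W_even hje, W_even hje']
    by_cases h0 : j % 4 = 0 <;> by_cases h0' : j' % 4 = 0 <;>
      simp [h0, h0'] at h ⊢
  · have hjo : j % 2 = 1 := Nat.odd_iff.mp ho
    have d1 : (2 * j + 1) / 2 = j := by omega
    have d2 : (2 * j' + 1) / 2 = j' := by omega
    rw [W_odd3 (i := 2 * j + 1) (by omega), d1] at h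
    rw [W_odd3 (i := 2 * j' + 1) (by omega), d2] at h
    exact h

lemma W_parity_ne {a b : ℕ} (h : a % 2 ≠ b % 2) : W a ≠ W b := by
  rcases Nat.lt_or_ge (a % 2) 1 with ha | ha
  · rcases W_mem_even (i := a) (by omega) with h1 | h1 <;>
      rcases W_mem_odd b (by omega) with h2 | h2 <;> simp [h1, h2]
  · rcases W_mem_odd a (by omega) with h1 | h1 <;>
      rcases W_mem_even (i := b) (by omega) with h2 | h2 <;> simp [h1, h2]

lemma noSquare : ∀ q, 0 < q → ∀ p, ¬ (∀ i, i < q → W (p + i) = W (p + q + i)) := by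
  intro q
  induction q using Nat.strong_induction_on with
  | _ q ih =>
    intro hq p hsq
    by_cases hodd : q % 2 = 1
    · exact W_parity_ne (a := p) (b := p + q) (by omega) (by simpa using hsq 0 hq)
    · by_cases h2 : q % 4 = 2
      · have h := hsq (p % 2) (by omega)
        rw [W_even (i := p + p % 2) (by omega), W_even (i := p + q + p % 2) (by omega)] at h
        by_cases h0 : (p + p % 2) % 4 = 0
        · rw [if_pos h0, if_neg (by omega)] at h; exact absurd h (by simp)
        · rw [if_neg h0, if_pos (by omega)] at h; exact absurd h (by simp)
      · have hq4 : q % 4 = 0 := by omega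
        refine ih (q / 2) (by omega) (by omega) (p / 2) (fun i hi => ?_)
        have key := hsq (2 * (p / 2 + i) + 1 - p) (by omega)
        have e1 : p + (2 * (p / 2 + i) + 1 - p) = 2 * (p / 2 + i) + 1 := by omega
        have e2 : p + q + (2 * (p / 2 + i) + 1 - p) = 2 * (p / 2 + q / 2 + i) + 1 := by omega
        rw [e1, e2] at key
        exact W_half (by omega) key

def Pl (m : ℕ) : FreeMonoid Letter := FreeMonoid.ofList ((List.range m).map W)

lemma Pl_succ (m : ℕ) : Pl (m + 1) = Pl m * FreeMonoid.of (W m) := by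
  rw [Pl, Pl, List.range_succ, List.map_append, FreeMonoid.ofList_append]
  rfl

lemma substPl : ∀ k, subst (Pl (2 * k + 1)) = Pl (4 * k + 3) := by
  intro k
  induction k with
  | zero =>
    have w0 : W 0 = Letter.U1 := by rw [W_even (by omega)]; simp
    have w1 : W 1 = Letter.U := by rw [W_odd1 (by omega), if_pos (by omega)]
    have w2 : W 2 = Letter.L1 := by rw [W_even (by omega), if_neg (by omega)]
    rw [show 2 * 0 + 1 = 0 + 1 by omega, show 4 * 0 + 3 = ((0 + 1) + 1) + 1 by omega,
      Pl_succ, Pl_succ, Pl_succ, Pl_succ, w0, w1, w2]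
    rfl
  | succ k ih =>
    have hs1 : subst (FreeMonoid.of (W (2 * k + 1))) = FreeMonoid.of (W (2 * k + 1)) := by
      rcases W_mem_odd (2 * k + 1) (by omega) with h | h <;> rw [h] <;> rfl
    have d43 : (4 * k + 3) / 2 = 2 * k + 1 := by omega
    have e43 : W (4 * k + 3) = W (2 * k + 1) := by
      rw [W_odd3 (i := 4 * k + 3) (by omega), d43]
    have e44 : W (4 * k + 4) = Letter.U1 := by
      rw [W_even (i := 4 * k + 4) (by omega), if_pos (by omega)]
    have e46 : W (4 * k + 6) = Letter.L1 := by
      rw [W_even (i := 4 * k + 6) (by omega), if_neg (by omega)]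
    have d45 : (4 * k + 5) / 2 = 2 * k + 2 := by omega
    have hsm : subst (FreeMonoid.of (W (2 * k + 2))) =
        FreeMonoid.of Letter.U1 * FreeMonoid.of (W (4 * k + 5)) * FreeMonoid.of Letter.L1 := by
      rw [W_even (i := 2 * k + 2) (by omega), W_odd1 (i := 4 * k + 5) (by omega), d45]
      by_cases h : (2 * k + 2) % 4 = 0
      · rw [if_pos h, if_pos h]; rfl
      · rw [if_neg h, if_neg h]; rfl
    rw [show 2 * (k + 1) + 1 = ((2 * k + 1) + 1) + 1 by omega,
      show 4 * (k + 1) + 3 = ((((4 * k + 3) + 1) + 1) + 1) + 1 by omega,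
      Pl_succ ((2 * k + 1) + 1), Pl_succ (2 * k + 1),
      Pl_succ ((((4 * k + 3) + 1) + 1) + 1), Pl_succ (((4 * k + 3) + 1) + 1),
      Pl_succ ((4 * k + 3) + 1), Pl_succ (4 * k + 3), map_mul, map_mul, ih, hs1,
      show (2 * k + 1) + 1 = 2 * k + 2 by omega,
      show (4 * k + 3) + 1 = 4 * k + 4 by omega,
      show (4 * k + 4) + 1 = 4 * k + 5 by omega,
      show (4 * k + 5) + 1 = 4 * k + 6 by omega,
      hsm, e43, e44, e46]
    simp [mul_assoc]

lemma iter_eq (n : ℕ) :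
    (⇑subst)^[n] (FreeMonoid.of Letter.U1) = Pl (2 ^ (n + 1) - 1) := by
  induction n with
  | zero =>
    have w0 : W 0 = Letter.U1 := by rw [W_even (by omega)]; simp
    show FreeMonoid.of Letter.U1 = Pl (2 ^ 1 - 1)
    rw [show 2 ^ 1 - 1 = 0 + 1 by omega, Pl_succ, w0]
    rfl
  | succ n ih =>
    have hp : (2 : ℕ) ^ (n + 1) = 2 * 2 ^ n := by rw [pow_succ]; ring
    have hp2 : (2 : ℕ) ^ (n + 2) = 4 * 2 ^ n := by rw [pow_succ, pow_succ]; ring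
    have h1 : (1 : ℕ) ≤ 2 ^ n := Nat.one_le_two_pow
    rw [Function.iterate_succ_apply', ih,
      show 2 ^ (n + 1) - 1 = 2 * (2 ^ n - 1) + 1 by omega, substPl]
    congr 1
    omega


/-- For every `n`, the word `f^n(U₁)` is square-free: it contains no factor of
the form `Q·Q` with `Q` nonempty. -/
theorem substIter_U1_squarefree (n : ℕ) :
    ¬ ∃ P Q S : FreeMonoid Letter, Q ≠ 1 ∧
      (⇑subst)^[n] (FreeMonoid.of Letter.U1) = P * Q * Q * S := by
  rintro ⟨P, Q, S, hQ, heq⟩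
  rw [iter_eq] at heq
  set N := 2 ^ (n + 1) - 1 with hN
  have heq' : (List.range N).map W =
      ((FreeMonoid.toList P ++ FreeMonoid.toList Q) ++ FreeMonoid.toList Q)
        ++ FreeMonoid.toList S := by
    have := congrArg FreeMonoid.toList heq
    simpa [Pl, FreeMonoid.toList_mul, FreeMonoid.toList_ofList] using this
  set p := (FreeMonoid.toList P).length
  set q := (FreeMonoid.toList Q).length
  set s := (FreeMonoid.toList S).length
  have hq0 : 0 < q := by
    rcases Nat.eq_zero_or_pos q with h | h
    · exact absurd (FreeMonoid.toList.injective
        ((List.length_eq_zero_iff.mp h).trans FreeMonoid.toList_one.symm)) hQ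
    · exact h
  have hlen : N = p + q + q + s := by
    have h2 := congrArg List.length heq'
    simp only [List.length_map, List.length_range, List.length_append] at h2
    omega
  refine noSquare q hq0 p (fun i hi => ?_)
  have key : ∀ j (hj : j < N), W j =
      (((FreeMonoid.toList P ++ FreeMonoid.toList Q) ++ FreeMonoid.toList Q)
        ++ FreeMonoid.toList S)[j]'(by
          simp only [List.length_append]; omega) := by
    intro j hj
    have h := List.getElem_of_eq heq' (by simpa using hj)
    simpa using h
  have k1 := key (p + i) (by omega)
  have k2 := key (p + q + i) (by omega)
  rw [List.getElem_append_left (by simp only [List.length_append]; omega),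
    List.getElem_append_left (by simp only [List.length_append]; omega),
    List.getElem_append_right (by omega)] at k1
  rw [List.getElem_append_left (by simp only [List.length_append]; omega),
    List.getElem_append_right (by simp only [List.length_append]; omega)] at k2
  rw [k1, k2]
  congr 1
  simp only [List.length_append]
  omega
end

section
/- Let A = {U₁, L₁, U, L} be a four-letter alphabet and let f be the monoid endomorphism of the free monoid on A determined by f(U₁) = U₁·U·L₁, f(L₁) = U₁·L·L₁, f(U) = U, f(L) = L. Then for every natural number n, the word f^n(L₁) (the n-th iterate of f applied to the one-letter word L₁) has no factor of the form Q·Q with Q a nonempty word. -/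
namespace SF

open Letter

def s : ℕ → ℕ → Letter
  | 0, _ => L
  | 1, _ => L
  | (n+2), m => if m % 2 = 0 then (if m % 4 = 0 then U else L) else s (n+1) (m/2)

lemma s_even (n m : ℕ) (h : m % 2 = 0) :
    s (n+2) m = if m % 4 = 0 then U else L := by simp [s, h]

lemma s_odd (n m : ℕ) (h : m % 2 = 1) :
    s (n+2) m = s (n+1) (m/2) := by simp [s, h]

lemma s_UL (n m : ℕ) : s n m = U ∨ s n m = L := by
  induction n using Nat.strong_induction_on generalizing m with
  | _ n ih =>
    match n with
    | 0 => simp [s]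
    | 1 => simp [s]
    | (k+2) =>
      rcases Nat.even_or_odd m with h | h
      · rw [s_even k m (Nat.even_iff.mp h)]; split <;> simp
      · rw [s_odd k m (Nat.odd_iff.mp h)]; exact ih (k+1) (by omega) _

lemma s_coh (n t : ℕ) (h : t < 2^n - 1) : s (n+2) t = s (n+1) t := by
  induction n generalizing t with
  | zero => omega
  | succ k ih =>
    rcases Nat.even_or_odd t with he | ho
    · rw [s_even _ _ (Nat.even_iff.mp he), s_even _ _ (Nat.even_iff.mp he)]
    · have ho' := Nat.odd_iff.mp ho
      rw [show k+1+2 = (k+2)+1 from rfl] at *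
      rw [s_odd _ _ ho', s_odd _ _ ho']
      exact ih _ (by have := Nat.pow_lt_pow_succ (a := 2) (by norm_num) (n := k); omega)

lemma s_midB (n : ℕ) : s (n+1) (2^n - 1) = L := by
  induction n with
  | zero => simp [s]
  | succ k ih =>
    have h1 : (1:ℕ) ≤ 2^k := Nat.one_le_two_pow
    have h2 : (2:ℕ)^(k+1) - 1 = 2*(2^k - 1) + 1 := by omega
    rw [h2, s_odd _ _ (by omega)]
    have h3 : (2*(2^k - 1) + 1)/2 = 2^k - 1 := by omega
    rw [h3]; exact ih

lemma s_midA (n : ℕ) : s (n+2) (2^n - 1) = U := by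
  induction n with
  | zero => simp [s]
  | succ k ih =>
    have h1 : (1:ℕ) ≤ 2^k := Nat.one_le_two_pow
    have h2 : (2:ℕ)^(k+1) - 1 = 2*(2^k - 1) + 1 := by omega
    rw [h2, show k+1+2 = (k+2)+1 from rfl, s_odd _ _ (by omega)]
    have h3 : (2*(2^k - 1) + 1)/2 = 2^k - 1 := by omega
    rw [h3]; exact ih

lemma s_shift2 (n t : ℕ) (h1 : 2^n ≤ t) (h2 : t < 2^(n+1) - 1) :
    s (n+2) t = s n (t - 2^n) := by
  induction n generalizing t with
  | zero => simp at h1 h2; omega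
  | succ k ih =>
    rcases Nat.even_or_odd t with he | ho
    · have he' := Nat.even_iff.mp he
      rw [show k+1+2 = (k+2)+1 from rfl, s_even _ _ he']
      match k, h1, h2, ih with
      | 0, h1, h2, _ =>
        have : t = 2 := by simp at h1 h2 ⊢; omega
        subst this; simp [s]
      | (j+1), h1, h2, _ =>
        rw [s_even _ _ (by omega)]
        have h4 : (2:ℕ)^(j+2) = 4 * 2^j := by ring
        have : (t - 2^(j+2)) % 4 = t % 4 := by omega
        rw [this]
    · have ho' := Nat.odd_iff.mp ho
      rw [show k+1+2 = (k+2)+1 from rfl, s_odd _ _ ho']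
      match k, h1, h2, ih with
      | 0, h1, h2, _ => simp at h1 h2; omega
      | (j+1), h1, h2, ih =>
        have e2 : (2:ℕ)^(j+2) = 2 * 2^(j+1) := by ring
        have e3 : (2:ℕ)^(j+3) = 4 * 2^(j+1) := by ring
        rw [s_odd j _ (by omega)]
        have e1 : (t - 2^(j+2))/2 = t/2 - 2^(j+1) := by omega
        rw [e1]
        exact ih (t/2) (by omega) (by omega)

lemma no_even_sq (n : ℕ) : ∀ p d : ℕ, 1 ≤ d → p + 4*d ≤ 2^n - 1 →
    (∀ i < 2*d, s n (p+i) = s n (p+i+2*d)) → False := by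
  induction n using Nat.strong_induction_on with
  | _ n ih =>
    match n with
    | 0 => intro p d hd hb _; simp at hb; omega
    | 1 => intro p d hd hb _; simp at hb; omega
    | (k+2) =>
      intro p d hd hb hsq
      rcases Nat.even_or_odd d with ⟨e, he⟩ | hdo
      · -- d even, d = 2e
        have he' : d = 2*e := by omega
        set j0 := if p % 2 = 1 then p else p + 1 with hj0
        have hj0odd : j0 % 2 = 1 := by unfold j0; split <;> omega
        have hj0p : p ≤ j0 ∧ j0 ≤ p + 1 := by unfold j0; split <;> omega
        set t0 := j0 / 2 with ht0
        have hjt : j0 = 2*t0 + 1 := by omega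
        have e2 : (2:ℕ)^(k+2) = 2 * 2^(k+1) := by ring
        refine ih (k+1) (by omega) t0 e (by omega) (by omega) ?_
        intro i hi
        have h := hsq (j0 - p + 2*i) (by omega)
        have r1 : p + (j0 - p + 2*i) = 2*(t0 + i) + 1 := by omega
        have r2 : 2*(t0 + i) + 1 + 2*d = 2*(t0 + i + 2*e) + 1 := by omega
        rw [r1, r2, s_odd _ _ (by omega), s_odd _ _ (by omega)] at h
        have d1 : (2*(t0 + i) + 1)/2 = t0 + i := by omega
        have d2 : (2*(t0 + i + 2*e) + 1)/2 = t0 + i + 2*e := by omega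
        rw [d1, d2] at h
        exact h
      · -- d odd
        have hdo' : d % 2 = 1 := Nat.odd_iff.mp hdo
        set j := if p % 2 = 0 then p else p + 1 with hj
        have hje : j % 2 = 0 := by unfold j; split <;> omega
        have hjp : p ≤ j ∧ j ≤ p + 1 := by unfold j; split <;> omega
        have h := hsq (j - p) (by omega)
        have r1 : p + (j - p) = j := by omega
        rw [r1] at h
        rw [s_even _ _ (by omega), s_even _ _ (by omega)] at h
        by_cases h0 : j % 4 = 0
        · simp [h0, show ¬((j + 2*d) % 4 = 0) by omega] at h
        · simp [h0, show (j + 2*d) % 4 = 0 by omega] at h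

lemma s_shift1 (n t : ℕ) (h1 : 2^n ≤ t) (h2 : t < 2^(n+1) - 1) :
    s (n+1) t = s n (t - 2^n) := by
  induction n generalizing t with
  | zero => simp at h1 h2; omega
  | succ k ih =>
    rcases Nat.even_or_odd t with he | ho
    · have he' := Nat.even_iff.mp he
      rw [s_even _ _ he']
      match k, h1, h2, ih with
      | 0, h1, h2, _ =>
        have : t = 2 := by simp at h1 h2 ⊢; omega
        subst this; simp [s]
      | (j+1), h1, h2, _ =>
        rw [s_even _ _ (by omega)]
        have h4 : (2:ℕ)^(j+2) = 4 * 2^j := by ring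
        have : (t - 2^(j+2)) % 4 = t % 4 := by omega
        rw [this]
    · have ho' := Nat.odd_iff.mp ho
      rw [s_odd _ _ ho']
      match k, h1, h2, ih with
      | 0, h1, h2, _ => simp at h1 h2; omega
      | (j+1), h1, h2, ih =>
        have e2 : (2:ℕ)^(j+2) = 2 * 2^(j+1) := by ring
        have e3 : (2:ℕ)^(j+3) = 4 * 2^(j+1) := by ring
        rw [s_odd j (t - 2^(j+2)) (by omega)]
        have e1 : (t - 2^(j+2))/2 = t/2 - 2^(j+1) := by omega
        rw [e1]
        exact ih (t/2) (by omega) (by omega)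

def AB : ℕ → List Letter × List Letter
  | 0 => ([U1], [L1])
  | n+1 => ((AB n).1 ++ [U] ++ (AB n).2, (AB n).1 ++ [L] ++ (AB n).2)

lemma AB_len (n : ℕ) : (AB n).1.length = 2^(n+1) - 1 ∧ (AB n).2.length = 2^(n+1) - 1 := by
  induction n with
  | zero => simp [AB]
  | succ m ih =>
    have e2 : (2:ℕ)^(m+2) = 2*2^(m+1) := by ring
    have h1 : (1:ℕ) ≤ 2^(m+1) := Nat.one_le_two_pow
    simp [AB]
    omega

lemma ABs1 (n : ℕ) : (AB (n+1)).1 = (AB n).1 ++ U :: (AB n).2 := by simp [AB]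

lemma ABs2 (n : ℕ) : (AB (n+1)).2 = (AB n).1 ++ L :: (AB n).2 := by simp [AB]

lemma getD_left {α : Type*} (A B' : List α) (d : α) (j : ℕ) (h : j < A.length) :
    (A ++ B').getD j d = A.getD j d := List.getD_append _ _ _ _ h

lemma getD_mid {α : Type*} (A B : List α) (x d : α) :
    (A ++ x :: B).getD A.length d = x := by
  rw [List.getD_append_right _ _ _ _ (le_refl _)]
  simp

lemma getD_right {α : Type*} (A B : List α) (x d : α) (j : ℕ) (h : A.length < j) :
    (A ++ x :: B).getD j d = B.getD (j - A.length - 1) d := by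
  rw [List.getD_append_right _ _ _ _ (by omega)]
  have : j - A.length = (j - A.length - 1) + 1 := by omega
  rw [this]
  simp

lemma AB_odd (n : ℕ) : ∀ t : ℕ, 2*t+1 < 2^(n+1) - 1 →
    ((AB n).1.getD (2*t+1) Letter.L = s (n+1) t) ∧
    ((AB n).2.getD (2*t+1) Letter.L = s n t) := by
  induction n with
  | zero => intro t h; simp at h
  | succ m ih =>
    intro t h
    have hM : (AB m).1.length = 2^(m+1) - 1 := (AB_len m).1
    have e2 : (2:ℕ)^(m+2) = 2*2^(m+1) := by ring
    have e1 : (2:ℕ)^(m+1) = 2*2^m := by ring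
    have h1 : (1:ℕ) ≤ 2^m := Nat.one_le_two_pow
    rcases lt_trichotomy (2*t+1) (2^(m+1) - 1) with hlt | heq | hgt
    · have hAv := (ih t (by omega)).1
      have hget : ∀ B' : List Letter, ((AB m).1 ++ B').getD (2*t+1) Letter.L = s (m+1) t := by
        intro B'; rw [getD_left _ _ _ _ (by omega)]; exact hAv
      constructor
      · rw [ABs1, hget, s_coh m t (by omega)]
      · rw [ABs2, hget]
    · have ht : t = 2^m - 1 := by omega
      subst ht
      constructor
      · rw [ABs1, show 2*(2^m-1)+1 = (AB m).1.length by omega, getD_mid]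
        exact (s_midA m).symm
      · rw [ABs2, show 2*(2^m-1)+1 = (AB m).1.length by omega, getD_mid]
        exact (s_midB m).symm
    · have hBv := (ih (t - 2^m) (by omega)).2
      have hidx : 2*t+1 - (AB m).1.length - 1 = 2*(t - 2^m) + 1 := by omega
      constructor
      · rw [ABs1, getD_right _ _ _ _ _ (by omega), hidx, hBv,
          s_shift2 m t (by omega) (by omega)]
      · rw [ABs2, getD_right _ _ _ _ _ (by omega), hidx, hBv,
          s_shift1 m t (by omega) (by omega)]

lemma AB_even (n : ℕ) : ∀ j : ℕ, j < 2^(n+1) - 1 → j % 2 = 0 →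
    ((AB n).1.getD j Letter.L = (if j % 4 = 0 then U1 else L1)) ∧
    (1 ≤ n → (AB n).2.getD j Letter.L = (if j % 4 = 0 then U1 else L1)) := by
  induction n with
  | zero =>
    intro j hj he
    have : j = 0 := by simp at hj; omega
    subst this
    simp [AB]
  | succ m ih =>
    intro j hj he
    have hM : (AB m).1.length = 2^(m+1) - 1 := (AB_len m).1
    have hM2 : (AB m).2.length = 2^(m+1) - 1 := (AB_len m).2
    have e2 : (2:ℕ)^(m+2) = 2*2^(m+1) := by ring
    have e1 : (2:ℕ)^(m+1) = 2*2^m := by ring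
    have h1 : (1:ℕ) ≤ 2^m := Nat.one_le_two_pow
    have key : ∀ x : Letter, ((AB m).1 ++ x :: (AB m).2).getD j Letter.L
        = (if j % 4 = 0 then U1 else L1) := by
      intro x
      rcases lt_trichotomy j (2^(m+1) - 1) with hlt | heq | hgt
      · rw [getD_left _ _ _ _ (by omega)]
        exact (ih j (by omega) he).1
      · omega  -- j even, 2^(m+1)-1 odd
      · rw [getD_right _ _ _ _ _ (by omega)]
        have hidx : j - (AB m).1.length - 1 = j - 2^(m+1) := by omega
        rw [hidx]
        match m, hj, hgt, e1, e2, h1, hM, hM2, ih with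
        | 0, hj, hgt, e1, e2, h1, hM, hM2, _ =>
          have : j = 2 := by omega
          subst this
          simp [AB]
        | (r+1), hj, hgt, e1, e2, h1, hM, hM2, ih =>
          have h4 : (2:ℕ)^(r+2) = 4*2^r := by ring
          have := (ih (j - 2^(r+2)) (by omega) (by omega)).2 (by omega)
          rw [this, show (j - 2^(r+2)) % 4 = j % 4 by omega]
    refine ⟨?_, fun _ => ?_⟩
    · rw [ABs1]; exact key U
    · rw [ABs2]; exact key L

end SF

open SF

lemma subst_of_U1 : subst (FreeMonoid.of Letter.U1)
    = FreeMonoid.of Letter.U1 * FreeMonoid.of Letter.U * FreeMonoid.of Letter.L1 := by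
  simp [subst]

lemma subst_of_L1 : subst (FreeMonoid.of Letter.L1)
    = FreeMonoid.of Letter.U1 * FreeMonoid.of Letter.L * FreeMonoid.of Letter.L1 := by
  simp [subst]

lemma iter_mul (n : ℕ) (x y : FreeMonoid Letter) :
    (⇑subst)^[n] (x * y) = (⇑subst)^[n] x * (⇑subst)^[n] y := by
  induction n generalizing x y with
  | zero => rfl
  | succ k ih =>
    rw [Function.iterate_succ_apply, Function.iterate_succ_apply,
      Function.iterate_succ_apply, map_mul, ih]

lemma iter_U (n : ℕ) : (⇑subst)^[n] (FreeMonoid.of Letter.U) = FreeMonoid.of Letter.U := by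
  induction n with
  | zero => rfl
  | succ k ih => rw [Function.iterate_succ_apply, show subst (FreeMonoid.of Letter.U)
      = FreeMonoid.of Letter.U by simp [subst], ih]

lemma iter_L (n : ℕ) : (⇑subst)^[n] (FreeMonoid.of Letter.L) = FreeMonoid.of Letter.L := by
  induction n with
  | zero => rfl
  | succ k ih => rw [Function.iterate_succ_apply, show subst (FreeMonoid.of Letter.L)
      = FreeMonoid.of Letter.L by simp [subst], ih]

lemma iter_toList (n : ℕ) :
    FreeMonoid.toList ((⇑subst)^[n] (FreeMonoid.of Letter.U1)) = (AB n).1 ∧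
    FreeMonoid.toList ((⇑subst)^[n] (FreeMonoid.of Letter.L1)) = (AB n).2 := by
  induction n with
  | zero => exact ⟨rfl, rfl⟩
  | succ m ih =>
    constructor
    · rw [Function.iterate_succ_apply, subst_of_U1, iter_mul, iter_mul, iter_U, ABs1]
      simp [FreeMonoid.toList_mul, ih.1, ih.2]
    · rw [Function.iterate_succ_apply, subst_of_L1, iter_mul, iter_mul, iter_L, ABs2]
      simp [FreeMonoid.toList_mul, ih.1, ih.2]


/-- For every `n`, the word `f^n(L₁)` is square-free: it contains no factor of
the form `Q·Q` with `Q` nonempty. -/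
theorem substIter_L1_squarefree (n : ℕ) :
    ¬ ∃ P Q S : FreeMonoid Letter, Q ≠ 1 ∧
      (⇑subst)^[n] (FreeMonoid.of Letter.L1) = P * Q * Q * S := by
  rintro ⟨P, Q, S, hQ, hEq⟩
  have hB := (iter_toList n).2
  have hq0 : FreeMonoid.toList Q ≠ [] := by simp [FreeMonoid.toList]; exact hQ
  have hlist : (AB n).2 = FreeMonoid.toList P ++ (FreeMonoid.toList Q
      ++ (FreeMonoid.toList Q ++ FreeMonoid.toList S)) := by
    rw [← hB, hEq]
    simp [FreeMonoid.toList_mul]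
  set p := FreeMonoid.toList P with hp
  set q := FreeMonoid.toList Q with hqd
  set s' := FreeMonoid.toList S with hs
  set k := q.length with hkd
  set p0 := p.length with hp0
  have hk : 1 ≤ k := by
    rcases q with _ | ⟨a, q'⟩
    · exact absurd rfl hq0
    · simp [hkd]
  have hlen : (AB n).2.length = 2^(n+1) - 1 := (AB_len n).2
  have hlen2 : p0 + (k + (k + s'.length)) = 2^(n+1) - 1 := by
    rw [← hlen, hlist]; simp [hp0, hkd]
  have key : ∀ i, i < k → (AB n).2.getD (p0 + i) Letter.L
      = (AB n).2.getD (p0 + k + i) Letter.L := by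
    intro i hi
    rw [hlist]
    rw [List.getD_append_right p _ Letter.L (p0 + i) (by omega),
      List.getD_append_right p _ Letter.L (p0 + k + i) (by omega),
      show p0 + i - p.length = i by omega,
      show p0 + k + i - p.length = k + i by omega,
      getD_left q _ Letter.L i hi,
      List.getD_append_right q _ Letter.L (k + i) (by omega),
      show k + i - q.length = i by omega,
      getD_left q _ Letter.L i hi]
  rcases n with _ | m
  · norm_num at hlen2; omega
  have eA : (2:ℕ)^(m+2) = 2*2^(m+1) := by ring
  have eB : (2:ℕ)^(m+1) = 2*2^m := by ring
  have h1 : (1:ℕ) ≤ 2^m := Nat.one_le_two_pow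
  have val_even : ∀ j, j < 2^(m+2) - 1 → j % 2 = 0 →
      (AB (m+1)).2.getD j Letter.L = (if j % 4 = 0 then Letter.U1 else Letter.L1) :=
    fun j hj he => (AB_even (m+1) j hj he).2 (by omega)
  have val_odd : ∀ t, 2*t+1 < 2^(m+2) - 1 →
      (AB (m+1)).2.getD (2*t+1) Letter.L = s (m+1) t :=
    fun t ht => (AB_odd (m+1) t ht).2
  rcases Nat.even_or_odd k with hke | hko
  · -- k even
    have hke' : k % 2 = 0 := Nat.even_iff.mp hke
    by_cases hk4 : k % 4 = 0
    · -- reduce to even square in s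
      set j0 := if p0 % 2 = 1 then p0 else p0 + 1 with hj0
      have hj0odd : j0 % 2 = 1 := by rw [hj0]; split <;> omega
      have hj0p : p0 ≤ j0 ∧ j0 ≤ p0 + 1 := by rw [hj0]; split <;> omega
      set t0 := j0 / 2 with ht0
      have hjt : j0 = 2*t0 + 1 := by omega
      refine no_even_sq (m+1) t0 (k/4) (by omega) (by omega) ?_
      intro i hi
      have h0 := key (j0 - p0 + 2*i) (by omega)
      rw [show p0 + (j0 - p0 + 2*i) = 2*(t0 + i) + 1 by omega,
        show p0 + k + (j0 - p0 + 2*i) = 2*(t0 + i + 2*(k/4)) + 1 by omega,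
        val_odd (t0 + i) (by omega),
        val_odd (t0 + i + 2*(k/4)) (by omega)] at h0
      exact h0
    · -- k ≡ 2 mod 4
      set j := if p0 % 2 = 0 then p0 else p0 + 1 with hj
      have hje : j % 2 = 0 := by rw [hj]; split <;> omega
      have hjp : p0 ≤ j ∧ j ≤ p0 + 1 := by rw [hj]; split <;> omega
      have h0 := key (j - p0) (by omega)
      rw [show p0 + (j - p0) = j by omega,
        show p0 + k + (j - p0) = j + k by omega,
        val_even j (by omega) (by omega),
        val_even (j + k) (by omega) (by omega)] at h0
      by_cases hj4 : j % 4 = 0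
      · simp [hj4, show ¬((j + k) % 4 = 0) by omega] at h0
      · simp [hj4, show (j + k) % 4 = 0 by omega] at h0
  · -- k odd
    have hko' : k % 2 = 1 := Nat.odd_iff.mp hko
    have h0 := key 0 (by omega)
    simp only [Nat.add_zero] at h0
    rcases Nat.even_or_odd p0 with hpe | hpo
    · have hpe' : p0 % 2 = 0 := Nat.even_iff.mp hpe
      rw [val_even p0 (by omega) hpe',
        show p0 + k = 2*((p0 + k)/2) + 1 by omega,
        val_odd ((p0 + k)/2) (by omega)] at h0
      rcases s_UL (m+1) ((p0 + k)/2) with h | h <;> rw [h] at h0 <;>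
        split at h0 <;> simp at h0
    · have hpo' : p0 % 2 = 1 := Nat.odd_iff.mp hpo
      rw [val_even (p0 + k) (by omega) (by omega),
        show p0 = 2*(p0/2) + 1 by omega,
        val_odd (p0/2) (by omega)] at h0
      rcases s_UL (m+1) (p0/2) with h | h <;> rw [h] at h0 <;>
        split at h0 <;> simp at h0
end

section
/- Let EdgeLevels be the sequence of words over the alphabet {1, 2, 3} defined by EdgeLevels(1) = 1, EdgeLevels(2) = 121, EdgeLevels(3) = 1213121, and EdgeLevels(k) = EdgeLevels(k−1)·3·EdgeLevels(k−1) for k > 3. Let g : {1,2,3} → {1,2,3} be given by g(1) = 2, g(2) = 3, g(3) = 3, and for a word w let T(w) be the word obtained from w by replacing every letter x by g(x) and then inserting the letter 1 at the beginning, at the end, and between every two consecutive letters (so T(w) = 1 · g(w₁) · 1 · g(w₂) · 1 · … · 1 · g(w_m) · 1). Then for every k ≥ 1, T(EdgeLevels(k)) = EdgeLevels(k+1). -/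
/-- The sequence of level-words on an internal edge: `EdgeLevels 1 = 1`,
`EdgeLevels 2 = 121`, `EdgeLevels 3 = 1213121`, and
`EdgeLevels k = EdgeLevels (k-1) ++ 3 ++ EdgeLevels (k-1)` for `k > 3`
(this recursion also holds at `k = 3`). -/
def EdgeLevels : ℕ → List ℕ
  | 0 => []
  | 1 => [1]
  | 2 => [1, 2, 1]
  | (n + 3) => EdgeLevels (n + 2) ++ 3 :: EdgeLevels (n + 2)

/-- The letter substitution `1 ↦ 2`, `2 ↦ 3`, `3 ↦ 3`. -/
def g : ℕ → ℕ
  | 1 => 2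
  | 2 => 3
  | 3 => 3
  | x => x

/-- `T w` replaces each letter `x` of `w` by `g x` and inserts the letter `1`
at the beginning, at the end, and between every two consecutive letters. -/
def T (w : List ℕ) : List ℕ :=
  1 :: w.flatMap (fun x => [g x, 1])

lemma T_append3 (u : List ℕ) : T (u ++ 3 :: u) = T u ++ 3 :: T u := by
  simp [T, List.flatMap_append, g]

/-- Applying the transformation `T` to `EdgeLevels k` yields
`EdgeLevels (k+1)`, for every `k ≥ 1`. -/
theorem T_edgeLevels (k : ℕ) (hk : 1 ≤ k) :
    T (EdgeLevels k) = EdgeLevels (k + 1) := by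
  induction k with
  | zero => omega
  | succ n ih =>
    match n with
    | 0 => decide
    | 1 => decide
    | (m + 2) =>
      have h := ih (by omega)
      show T (EdgeLevels (m + 2) ++ 3 :: EdgeLevels (m + 2)) = _
      rw [T_append3, h]
      rfl
end
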